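/- Let G be the Cantor function, define g : [0, 2π] → [0, 1] by g(x) := G(x/(2π)), let I_g(x) := ∫₀ˣ g(t) dt, and let S_g(x) := I_g(x) − x²/(4π) + π. Then S_g(x) ≥ π for all x ∈ [0, 2π]; S_g(0) = S_g(2π) = π (equivalently, I_g(x) ≥ x²/(4π) on [0, 2π] and I_g(2π) = π); and x ↦ S_g(x) + x²/(4π) is convex on [0, 2π], so S_g is semiconvex. -/

import Mathlib

open Set Metric Filter
open scoped ENNReal NNReal Classical

noncomputable section

/-- `a` is a ternary expansion of `x`: digits in `{0, 1, 2}` (indexed from `0`,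
representing the digit of `3⁻⁽ⁿ⁺¹⁾`) with `x = Σ aₙ 3⁻⁽ⁿ⁺¹⁾`. -/
def IsTernaryExpansion (x : ℝ) (a : ℕ → ℕ) : Prop :=
  (∀ n, a n ≤ 2) ∧ x = ∑' n : ℕ, (a n : ℝ) / 3 ^ (n + 1)

/-- The value of the Cantor function computed from a ternary digit sequence `a`
(`a n` is the digit of `3⁻⁽ⁿ⁺¹⁾`): if `N` is the position of the first digit `1`
(1-based), the value is `2⁻ᴺ + (1/2) Σ_{n<N} aₙ 2⁻ⁿ`; if no digit equals `1`, the value is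
`(1/2) Σₙ aₙ 2⁻ⁿ`. -/
def cantorVal (a : ℕ → ℕ) : ℝ :=
  if h : ∃ n, a n = 1 then
    (1 : ℝ) / 2 ^ (Nat.find h + 1) +
      (1 / 2) * ∑ n ∈ Finset.range (Nat.find h), (a n : ℝ) / 2 ^ (n + 1)
  else (1 / 2) * ∑' n : ℕ, (a n : ℝ) / 2 ^ (n + 1)

/-!
Reading off the first ternary digit, the Cantor function solves on `[0, 1]` the self-similarity
equations `G x = G (3x) / 2` on the left third, `G = 1/2` on the middle third and
`G x = 1/2 + G (3x - 2) / 2` on the right third, with values in `[0, 1]`. These equations are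
rigid: a bounded quantity built from `G` that, wherever it is positive, is at most half of its
value at a rescaled point, must be nonpositive. This gives uniqueness of the solution, hence the
symmetry `G (1 - x) = 1 - G x` and `∫₀¹ G = 1/2`, as well as monotonicity and `2x/3 ≤ G x`,
whence `x ≤ G x` on `[0, 1/2]` and `G x ≤ x` on `[1/2, 1]`. Integrating gives
`∫₀^y G ≥ y²/2` on `[0, 1]`, and the primitive of a monotone function is convex; rescaling by
`2π` yields the statement.
-/

open MeasureTheory intervalIntegral Real

def digitCons (d : ℕ) (a : ℕ → ℕ) : ℕ → ℕ
  | 0 => d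
  | n + 1 => a n

@[simp] lemma digitCons_zero (d : ℕ) (a : ℕ → ℕ) : digitCons d a 0 = d := rfl

@[simp] lemma digitCons_succ (d : ℕ) (a : ℕ → ℕ) (n : ℕ) : digitCons d a (n + 1) = a n := rfl

lemma summable_div_pow_of_le {a : ℕ → ℕ} {M : ℕ} (ha : ∀ n, a n ≤ M) {b : ℝ} (hb : 1 < b) :
    Summable fun n => (a n : ℝ) / b ^ (n + 1) := by
  have hb₀ : 0 < b := zero_lt_one.trans hb
  refine .of_nonneg_of_le (fun n => by positivity) (fun n => ?_)
    ((summable_geometric_of_lt_one (inv_nonneg.2 hb₀.le) (inv_lt_one_of_one_lt₀ hb)).mul_left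
      (M / b))
  calc (a n : ℝ) / b ^ (n + 1) ≤ M / b ^ (n + 1) := by gcongr; exact_mod_cast ha n
    _ = M / b * b⁻¹ ^ n := by rw [pow_succ', inv_pow]; field_simp

lemma tsum_digitCons_div_pow {a : ℕ → ℕ} {b : ℝ} (d : ℕ)
    (hs : Summable fun n => (a n : ℝ) / b ^ (n + 1)) :
    ∑' n, (digitCons d a n : ℝ) / b ^ (n + 1) = (d + ∑' n, (a n : ℝ) / b ^ (n + 1)) / b := by
  have hshift : ∀ n, (digitCons d a (n + 1) : ℝ) / b ^ (n + 1 + 1) = (a n : ℝ) / b ^ (n + 1) / b :=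
    fun n => by rw [digitCons_succ, pow_succ _ (n + 1), div_div]
  rw [tsum_eq_zero_add' (by simpa only [hshift] using hs.div_const b)]
  simp only [hshift, tsum_div_const, digitCons_zero, zero_add, pow_one, add_div]

lemma IsTernaryExpansion.digitCons {x : ℝ} {a : ℕ → ℕ} (h : IsTernaryExpansion x a) {d : ℕ}
    (hd : d ≤ 2) : IsTernaryExpansion ((d + x) / 3) (digitCons d a) := by
  refine ⟨fun n => by cases n <;> simp [hd, h.1], ?_⟩
  rw [tsum_digitCons_div_pow d (summable_div_pow_of_le h.1 (by norm_num)), ← h.2]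

lemma exists_isTernaryExpansion {x : ℝ} (hx : x ∈ Icc 0 1) : ∃ a, IsTernaryExpansion x a := by
  obtain ⟨d, -, rfl⟩ := Real.ofDigits_SurjOn (b := 3) (by norm_num) hx
  refine ⟨fun n => d n, fun n => Nat.le_of_lt_succ (d n).isLt, ?_⟩
  simp [Real.ofDigits, Real.ofDigitsTerm, div_eq_mul_inv]

lemma cantorVal_digitCons_one (a : ℕ → ℕ) : cantorVal (digitCons 1 a) = 1 / 2 := by
  have h : ∃ n, digitCons 1 a n = 1 := ⟨0, rfl⟩
  rw [cantorVal, dif_pos h, (Nat.find_eq_zero h).2 rfl]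
  norm_num

lemma cantorVal_digitCons {a : ℕ → ℕ} (ha : ∀ n, a n ≤ 2) {d : ℕ} (hd : d ≠ 1) :
    cantorVal (digitCons d a) = (d / 2 + cantorVal a) / 2 := by
  by_cases h : ∃ n, a n = 1
  · have h' : ∃ n, digitCons d a n = 1 := ⟨Nat.find h + 1, Nat.find_spec h⟩
    rw [cantorVal, cantorVal, dif_pos h, dif_pos h', Nat.find_comp_succ h' h hd,
      Finset.sum_range_succ']
    simp only [digitCons_succ, digitCons_zero, pow_succ _ (_ + 1), ← div_div, ← Finset.sum_div]
    ring
  · have h' : ¬∃ n, digitCons d a n = 1 := by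
      rintro ⟨_ | n, hn⟩
      exacts [hd hn, h ⟨n, hn⟩]
    rw [cantorVal, cantorVal, dif_neg h, dif_neg h',
      tsum_digitCons_div_pow d (summable_div_pow_of_le ha one_lt_two)]
    ring

lemma cantorVal_mem_Icc {a : ℕ → ℕ} (ha : ∀ n, a n ≤ 2) : cantorVal a ∈ Icc 0 1 := by
  have hdigit : ∀ n, (a n : ℝ) / 2 ^ (n + 1) ≤ (1 / 2) ^ n := fun n => by
    calc (a n : ℝ) / 2 ^ (n + 1) ≤ 2 / 2 ^ (n + 1) := by gcongr; exact_mod_cast ha n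
      _ = (1 / 2) ^ n := by rw [pow_succ, one_div_pow]; field_simp
  rw [cantorVal]
  split_ifs with h
  · set N := Nat.find h
    have hsum : ∑ n ∈ Finset.range N, (a n : ℝ) / 2 ^ (n + 1) ≤ 2 - 2 * (1 / 2) ^ N := by
      calc _ ≤ ∑ n ∈ Finset.range N, ((1 : ℝ) / 2) ^ n := Finset.sum_le_sum fun n _ => hdigit n
        _ = 2 - 2 * (1 / 2) ^ N := by rw [geom_sum_eq (by norm_num)]; ring
    have hlast : (1 : ℝ) / 2 ^ (N + 1) = (1 / 2) ^ N / 2 := by rw [pow_succ, one_div_pow, div_div]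
    exact ⟨by positivity, by linarith [pow_pos (one_half_pos (α := ℝ)) N]⟩
  · have hsum : ∑' n, (a n : ℝ) / 2 ^ (n + 1) ≤ 2 :=
      calc _ ≤ ∑' n : ℕ, ((1 : ℝ) / 2) ^ n :=
            (summable_div_pow_of_le ha one_lt_two).tsum_le_tsum hdigit summable_geometric_two
        _ = 2 := tsum_geometric_two
    exact ⟨by positivity, by linarith⟩

lemma exists_cantorVal_digitCons {G : ℝ → ℝ}
    (hG : ∀ x ∈ Icc (0 : ℝ) 1, ∀ a, IsTernaryExpansion x a → G x = cantorVal a)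
    {d : ℕ} (hd : d ≤ 2) {x : ℝ} (hx : 3 * x - d ∈ Icc 0 1) :
    ∃ a, (∀ n, a n ≤ 2) ∧ G x = cantorVal (digitCons d a) ∧ G (3 * x - d) = cantorVal a := by
  obtain ⟨a, ha⟩ := exists_isTernaryExpansion hx
  have hx' := ha.digitCons hd
  rw [add_sub_cancel, mul_div_cancel_left₀ _ three_ne_zero] at hx'
  have hd' : (d : ℝ) ≤ 2 := by exact_mod_cast hd
  exact ⟨a, ha.1, hG x ⟨by linarith [hx.1], by linarith [hx.2]⟩ _ hx', hG _ hx a ha⟩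

structure CantorEquations (G : ℝ → ℝ) : Prop where
  left : ∀ x ∈ Icc (0 : ℝ) (1 / 3), G x = G (3 * x) / 2
  middle : ∀ x ∈ Icc (1 / 3 : ℝ) (2 / 3), G x = 1 / 2
  right : ∀ x ∈ Icc (2 / 3 : ℝ) 1, G x = 1 / 2 + G (3 * x - 2) / 2
  mapsTo : MapsTo G (Icc 0 1) (Icc 0 1)

theorem CantorEquations.of_isTernaryExpansion {G : ℝ → ℝ}
    (hG : ∀ x ∈ Icc (0 : ℝ) 1, ∀ a, IsTernaryExpansion x a → G x = cantorVal a) :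
    CantorEquations G := by
  refine ⟨fun x hx => ?_, fun x hx => ?_, fun x hx => ?_, fun x hx => ?_⟩
  · obtain ⟨a, ha, hx', h3x⟩ := exists_cantorVal_digitCons hG (d := 0) (by norm_num) (x := x)
      (by constructor <;> push_cast <;> linarith [hx.1, hx.2])
    rw [hx', cantorVal_digitCons ha (by norm_num), ← h3x]
    push_cast
    ring_nf
  · obtain ⟨a, -, hx', -⟩ := exists_cantorVal_digitCons hG (d := 1) (by norm_num) (x := x)
      (by constructor <;> push_cast <;> linarith [hx.1, hx.2])
    rw [hx', cantorVal_digitCons_one]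
  · obtain ⟨a, ha, hx', h3x⟩ := exists_cantorVal_digitCons hG (d := 2) (by norm_num) (x := x)
      (by constructor <;> push_cast <;> linarith [hx.1, hx.2])
    rw [hx', cantorVal_digitCons ha (by norm_num), ← h3x]
    push_cast
    ring
  · obtain ⟨a, ha⟩ := exists_isTernaryExpansion hx
    exact hG x hx a ha ▸ cantorVal_mem_Icc ha.1

theorem nonpos_of_le_half_of_pos {α : Type*} {s : Set α} {φ : α → ℝ} {C : ℝ}
    (hC : ∀ p ∈ s, φ p ≤ C) (hhalf : ∀ p ∈ s, 0 < φ p → ∃ q ∈ s, φ p ≤ φ q / 2) :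
    ∀ p ∈ s, φ p ≤ 0 := by
  have hbound : ∀ n : ℕ, ∀ p ∈ s, φ p ≤ max C 0 / 2 ^ n := by
    intro n
    induction n with
    | zero => exact fun p hp => by simpa using (hC p hp).trans (le_max_left C 0)
    | succ n ih =>
      intro p hp
      rcases le_or_gt (φ p) 0 with hneg | hpos
      · exact hneg.trans (by positivity)
      · obtain ⟨q, hq, hpq⟩ := hhalf p hp hpos
        calc φ p ≤ φ q / 2 := hpq
          _ ≤ max C 0 / 2 ^ n / 2 := by gcongr; exact ih q hq
          _ = max C 0 / 2 ^ (n + 1) := by rw [pow_succ, div_div]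
  intro p hp
  have hlim : Tendsto (fun n : ℕ => max C 0 / 2 ^ n) atTop (nhds 0) := by
    simpa using tendsto_const_nhds.div_atTop (tendsto_pow_atTop_atTop_of_one_lt one_lt_two)
  exact ge_of_tendsto' hlim fun n => hbound n p hp

namespace CantorEquations

variable {G : ℝ → ℝ} (hG : CantorEquations G)
include hG

theorem reflect : CantorEquations fun x => 1 - G (1 - x) := by
  refine ⟨fun x hx => ?_, fun x hx => ?_, fun x hx => ?_, fun x hx => ?_⟩
  · rw [hG.right (1 - x) ⟨by linarith [hx.2], by linarith [hx.1]⟩]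
    ring_nf
  · rw [hG.middle (1 - x) ⟨by linarith [hx.2], by linarith [hx.1]⟩]
    norm_num
  · rw [hG.left (1 - x) ⟨by linarith [hx.2], by linarith [hx.1]⟩]
    ring_nf
  · have := hG.mapsTo (show 1 - x ∈ Icc (0 : ℝ) 1 from ⟨by linarith [hx.2], by linarith [hx.1]⟩)
    exact ⟨by linarith [this.2], by linarith [this.1]⟩

theorem apply_le {H : ℝ → ℝ} (hH : CantorEquations H) {x : ℝ} (hx : x ∈ Icc (0 : ℝ) 1) :
    G x ≤ H x := by
  refine sub_nonpos.1 <| nonpos_of_le_half_of_pos (φ := fun y => G y - H y) (C := 1)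
    (fun y hy => ?_) (fun y hy hpos => ?_) x hx
  · linarith [(hG.mapsTo hy).2, (hH.mapsTo hy).1]
  · rcases le_total y (1 / 3) with h₁ | h₁
    · refine ⟨3 * y, ⟨by linarith [hy.1], by linarith⟩, ?_⟩
      rw [hG.left y ⟨hy.1, h₁⟩, hH.left y ⟨hy.1, h₁⟩]
      linarith
    rcases le_total y (2 / 3) with h₂ | h₂
    · simp [hG.middle y ⟨h₁, h₂⟩, hH.middle y ⟨h₁, h₂⟩] at hpos
    · refine ⟨3 * y - 2, ⟨by linarith, by linarith [hy.2]⟩, ?_⟩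
      rw [hG.right y ⟨h₂, hy.2⟩, hH.right y ⟨h₂, hy.2⟩]
      linarith

theorem eqOn {H : ℝ → ℝ} (hH : CantorEquations H) : EqOn G H (Icc 0 1) :=
  fun _ hx => le_antisymm (hG.apply_le hH hx) (hH.apply_le hG hx)

theorem apply_one_sub {x : ℝ} (hx : x ∈ Icc (0 : ℝ) 1) : G (1 - x) = 1 - G x := by
  have := hG.reflect.eqOn hG hx
  simp only at this
  linarith

theorem apply_le_half {x : ℝ} (hx : x ∈ Icc (0 : ℝ) (2 / 3)) : G x ≤ 1 / 2 := by
  rcases le_total x (1 / 3) with h | h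
  · rw [hG.left x ⟨hx.1, h⟩]
    linarith [(hG.mapsTo (show 3 * x ∈ Icc (0 : ℝ) 1 from ⟨by linarith [hx.1], by linarith⟩)).2]
  · exact (hG.middle x ⟨h, hx.2⟩).le

theorem half_le_apply {x : ℝ} (hx : x ∈ Icc (1 / 3 : ℝ) 1) : 1 / 2 ≤ G x := by
  have h := hG.apply_le_half (x := 1 - x) ⟨by linarith [hx.2], by linarith [hx.1]⟩
  rw [hG.apply_one_sub ⟨by linarith [hx.1], hx.2⟩] at h
  linarith

theorem monotoneOn : MonotoneOn G (Icc 0 1) := by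
  intro x hx y hy hxy
  refine sub_nonpos.1 <| nonpos_of_le_half_of_pos (s := {p : ℝ × ℝ | 0 ≤ p.1 ∧ p.1 ≤ p.2 ∧ p.2 ≤ 1})
    (φ := fun p => G p.1 - G p.2) (C := 1) (fun p hp => ?_) (fun p hp _ => ?_)
    (x, y) ⟨hx.1, hxy, hy.2⟩
  · linarith [(hG.mapsTo ⟨hp.1, hp.2.1.trans hp.2.2⟩).2, (hG.mapsTo ⟨hp.1.trans hp.2.1, hp.2.2⟩).1]
  obtain ⟨h₀, h₁, h₂⟩ := hp
  rcases le_total p.2 (1 / 3) with h | h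
  · refine ⟨(3 * p.1, 3 * p.2), ⟨by linarith, by linarith, by linarith⟩, ?_⟩
    rw [hG.left p.1 ⟨h₀, by linarith⟩, hG.left p.2 ⟨by linarith, h⟩]
    linarith
  rcases le_total (2 / 3) p.1 with h' | h'
  · refine ⟨(3 * p.1 - 2, 3 * p.2 - 2), ⟨by linarith, by linarith, by linarith⟩, ?_⟩
    rw [hG.right p.1 ⟨h', by linarith⟩, hG.right p.2 ⟨by linarith, h₂⟩]
    linarith
  · linarith [hG.apply_le_half ⟨h₀, h'⟩, hG.half_le_apply ⟨h, h₂⟩]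

theorem two_div_three_mul_le {x : ℝ} (hx : x ∈ Icc (0 : ℝ) 1) : 2 / 3 * x ≤ G x := by
  refine sub_nonpos.1 <| nonpos_of_le_half_of_pos (φ := fun y => 2 / 3 * y - G y) (C := 1)
    (fun y hy => ?_) (fun y hy hpos => ?_) x hx
  · linarith [(hG.mapsTo hy).1, hy.2]
  · rcases le_total y (1 / 3) with h₁ | h₁
    · refine ⟨3 * y, ⟨by linarith [hy.1], by linarith⟩, ?_⟩
      rw [hG.left y ⟨hy.1, h₁⟩]
      linarith [hy.1]
    rcases le_total y (2 / 3) with h₂ | h₂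
    · simp only [hG.middle y ⟨h₁, h₂⟩] at hpos
      linarith
    · refine ⟨3 * y - 2, ⟨by linarith, by linarith [hy.2]⟩, ?_⟩
      rw [hG.right y ⟨h₂, hy.2⟩]
      linarith

theorem self_le_apply {x : ℝ} (hx : x ∈ Icc (0 : ℝ) (1 / 2)) : x ≤ G x := by
  rcases le_total x (1 / 3) with h | h
  · rw [hG.left x ⟨hx.1, h⟩]
    linarith [hG.two_div_three_mul_le (x := 3 * x) ⟨by linarith [hx.1], by linarith⟩]
  · linarith [hG.half_le_apply ⟨h, by linarith [hx.2]⟩, hx.2]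

theorem apply_le_self {x : ℝ} (hx : x ∈ Icc (1 / 2 : ℝ) 1) : G x ≤ x := by
  have h := hG.self_le_apply (x := 1 - x) ⟨by linarith [hx.2], by linarith [hx.1]⟩
  rw [hG.apply_one_sub ⟨by linarith [hx.1], hx.2⟩] at h
  linarith

theorem intervalIntegrable {a b : ℝ} (ha : a ∈ Icc (0 : ℝ) 1) (hb : b ∈ Icc (0 : ℝ) 1) :
    IntervalIntegrable G volume a b :=
  (hG.monotoneOn.mono (uIcc_subset_Icc ha hb)).intervalIntegrable

theorem integral_zero_one : ∫ x in (0 : ℝ)..1, G x = 1 / 2 := by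
  have hint := hG.intervalIntegrable (a := 0) (b := 1) (by simp) (by simp)
  have hsymm : ∫ x in (0 : ℝ)..1, G (1 - x) = ∫ x in (0 : ℝ)..1, (1 - G x) :=
    integral_congr fun x hx => hG.apply_one_sub (uIcc_of_le (zero_le_one' ℝ) ▸ hx)
  rw [integral_comp_sub_left, sub_self, sub_zero, integral_sub intervalIntegrable_const hint,
    intervalIntegral.integral_const, sub_zero, smul_eq_mul, mul_one] at hsymm
  linarith

theorem sq_div_two_le_integral {y : ℝ} (hy : y ∈ Icc (0 : ℝ) 1) :
    y ^ 2 / 2 ≤ ∫ x in (0 : ℝ)..y, G x := by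
  have hint₀ := hG.intervalIntegrable (a := 0) (by simp) hy
  rcases le_total y (1 / 2) with h | h
  · calc y ^ 2 / 2 = ∫ x in (0 : ℝ)..y, x := by simp [integral_id]
      _ ≤ ∫ x in (0 : ℝ)..y, G x :=
        integral_mono_on hy.1 intervalIntegrable_id hint₀ fun x hx =>
          hG.self_le_apply ⟨hx.1, hx.2.trans h⟩
  · have hint₁ := hG.intervalIntegrable hy (b := 1) (by simp)
    have htail : ∫ x in y..1, G x ≤ ∫ x in y..1, x :=
      integral_mono_on hy.2 hint₁ intervalIntegrable_id fun x hx =>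
        hG.apply_le_self ⟨h.trans hx.1, hx.2⟩
    rw [integral_id] at htail
    linarith [integral_add_adjacent_intervals hint₀ hint₁, hG.integral_zero_one]

end CantorEquations

theorem MonotoneOn.convexOn_primitive {f : ℝ → ℝ} {a b c : ℝ} (hf : MonotoneOn f (Icc a b))
    (hc : c ∈ Icc a b) : ConvexOn ℝ (Icc a b) fun x => ∫ t in c..x, f t := by
  have hint : ∀ {x y}, x ∈ Icc a b → y ∈ Icc a b → IntervalIntegrable f volume x y :=
    fun hx hy => (hf.mono (uIcc_subset_Icc hx hy)).intervalIntegrable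
  refine convexOn_of_slope_mono_adjacent (convex_Icc a b) fun {x y z} hx hz hxy hyz => ?_
  have hy : y ∈ Icc a b := ⟨hx.1.trans hxy.le, hyz.le.trans hz.2⟩
  rw [integral_interval_sub_left (hint hc hy) (hint hc hx),
    integral_interval_sub_left (hint hc hz) (hint hc hy),
    div_le_div_iff₀ (sub_pos.2 hxy) (sub_pos.2 hyz)]
  have hleft : ∫ t in x..y, f t ≤ (y - x) * f y := by
    simpa using integral_mono_on hxy.le (hint hx hy) intervalIntegrable_const
      fun t ht => hf ⟨hx.1.trans ht.1, ht.2.trans hy.2⟩ hy ht.2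
  have hright : (z - y) * f y ≤ ∫ t in y..z, f t := by
    simpa using integral_mono_on hyz.le intervalIntegrable_const (hint hy hz)
      fun t ht => hf hy ⟨hy.1.trans ht.1, ht.2.trans hz.2⟩ ht.1
  nlinarith [sub_pos.2 hxy, sub_pos.2 hyz]

/-- **Properties of the stretched Cantor integral.**
With `G` the Cantor function, `g x = G (x / 2π)`, `I_g x = ∫_0^x g`, and
`S_g x = I_g x - x²/(4π) + π`, we have `S_g ≥ π` on `[0, 2π]`,
`S_g 0 = S_g (2π) = π` (equivalently `I_g x ≥ x²/(4π)` on `[0, 2π]` and `I_g (2π) = π`),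
and `x ↦ S_g x + x²/(4π)` is convex on `[0, 2π]`, so `S_g` is semiconvex. -/
theorem cantor_integral_properties
    (G : ℝ → ℝ)
    (hG : ∀ x ∈ Set.Icc (0:ℝ) 1, ∀ a : ℕ → ℕ, IsTernaryExpansion x a → G x = cantorVal a)
    (g Ig Sg : ℝ → ℝ)
    (hg : ∀ x : ℝ, g x = G (x / (2 * Real.pi)))
    (hIg : ∀ x : ℝ, Ig x = ∫ t in (0:ℝ)..x, g t)
    (hSg : ∀ x : ℝ, Sg x = Ig x - x ^ 2 / (4 * Real.pi) + Real.pi) :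
    (∀ x ∈ Set.Icc 0 (2 * Real.pi), Real.pi ≤ Sg x) ∧
    Sg 0 = Real.pi ∧ Sg (2 * Real.pi) = Real.pi ∧
    (∀ x ∈ Set.Icc 0 (2 * Real.pi), x ^ 2 / (4 * Real.pi) ≤ Ig x) ∧
    Ig (2 * Real.pi) = Real.pi ∧
    ConvexOn ℝ (Set.Icc 0 (2 * Real.pi)) (fun x => Sg x + x ^ 2 / (4 * Real.pi)) := by
  have hG' := CantorEquations.of_isTernaryExpansion hG
  have hπ := Real.pi_pos
  have hscale : ∀ {x}, x ∈ Icc 0 (2 * π) → x / (2 * π) ∈ Icc (0 : ℝ) 1 := fun hx =>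
    ⟨by have := hx.1; positivity, div_le_one_of_le₀ hx.2 (by positivity)⟩
  have hIg' : ∀ x, Ig x = 2 * π * ∫ t in (0 : ℝ)..x / (2 * π), G t := fun x => by
    simp only [hIg, hg, integral_comp_div _ (by positivity : 2 * π ≠ 0), zero_div, smul_eq_mul]
  have hlower : ∀ x ∈ Icc 0 (2 * π), x ^ 2 / (4 * π) ≤ Ig x := fun x hx => by
    calc x ^ 2 / (4 * π) = 2 * π * ((x / (2 * π)) ^ 2 / 2) := by field_simp; ring
      _ ≤ Ig x := hIg' x ▸ by gcongr; exact hG'.sq_div_two_le_integral (hscale hx)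
  have htotal : Ig (2 * π) = π := by
    rw [hIg', div_self (by positivity), hG'.integral_zero_one]; ring
  have hconvex : ConvexOn ℝ (Icc 0 (2 * π)) Ig := by
    have hmono : MonotoneOn g (Icc 0 (2 * π)) := fun x hx y hy hxy => by
      simpa only [hg] using hG'.monotoneOn (hscale hx) (hscale hy) (by gcongr)
    simpa only [← hIg] using hmono.convexOn_primitive ⟨le_rfl, by positivity⟩
  refine ⟨fun x hx => ?_, ?_, ?_, hlower, htotal, ?_⟩
  · linarith [hSg x, hlower x hx]
  · simp [hSg, hIg]
  · rw [hSg, htotal]; field_simp; ring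
  · refine (hconvex.add_const π).congr fun x _ => ?_
    simp only [hSg, Pi.add_apply]
    ring
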